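/- Fix m ≥ 1. If F is an ∅-minimal maximal intersecting subfamily of P([m]), then there exist nonnegative reals (c_a)_{a∈[m]} with Σ_{a∈[m]} c_a = 1 and nonnegative reals (λ_{(A,B)})_{A⊆B⊆[m]} such that vec(F) = Σ_{a∈[m]} c_a · vec(Star_a(P([m]))) + Σ_{A⊆B⊆[m]} λ_{(A,B)} (e_B − e_A). -/

import Mathlib

open Finset

variable {m : ℕ}

/-- A family of finsets is intersecting if any two members meet. -/
def IsIntersecting (F : Finset (Finset (Fin m))) : Prop :=
  ∀ A ∈ F, ∀ B ∈ F, (A ∩ B).Nonempty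

/-- A maximal intersecting subfamily of the power set of `Fin m`. -/
def IsMaxIntersecting (F : Finset (Finset (Fin m))) : Prop :=
  IsIntersecting F ∧ ∀ G : Finset (Finset (Fin m)), IsIntersecting G → F ⊆ G → G ⊆ F

/-- A family is subset-closed if it contains all subsets of its members. -/
def IsSubsetClosed (F : Finset (Finset (Fin m))) : Prop :=
  ∀ A ∈ F, ∀ B ⊆ A, B ∈ F

/-- The embedding of a family into `ℝ^{P([m])}`. -/
def famVec (F : Finset (Finset (Fin m))) : Finset (Fin m) → ℝ := fun A =>
  if A ∈ F ∧ Aᶜ ∉ F then 1 else if A ∉ F ∧ Aᶜ ∈ F then -1 else 0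

/-- The standard basis vector `e_A` of `ℝ^{P([m])}`. -/
def stdBasis (A : Finset (Fin m)) : Finset (Fin m) → ℝ := fun B => if B = A then 1 else 0

/-- The star of a family centered at `a`. -/
def starFam (a : Fin m) (F : Finset (Finset (Fin m))) : Finset (Finset (Fin m)) :=
  F.filter fun A => a ∈ A

/-- The setwise complement (dual) `F* = {Aᶜ : A ∈ F}`. -/
def dualFam (F : Finset (Finset (Fin m))) : Finset (Finset (Fin m)) :=
  F.image fun A => Aᶜ

/-- `Tpath σ C k = C △ {σ(1), …, σ(k)}` (0-indexed: the images of the first `k` indices). -/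
def Tpath (σ : Equiv.Perm (Fin m)) (C : Finset (Fin m)) (k : ℕ) : Finset (Fin m) :=
  symmDiff C ((Finset.univ.filter fun i : Fin m => (i : ℕ) < k).image σ)

/-- The path-sum `Λ(H)` as a vector in `ℝ^{P([m]) × P([m])}`: at coordinate `(X, Y)` it is the
number of triples `(σ, C, k)` whose `k`-th path step goes from `X` to `Y`, minus the number of
triples whose `k`-th step goes from `Y` to `X`. -/
def LamW (H : Finset (Finset (Fin m))) (X Y : Finset (Fin m)) : ℝ :=
  ∑ σ : Equiv.Perm (Fin m), ∑ C ∈ H, ∑ k ∈ Finset.Icc 1 m,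
    ((if Tpath σ C (k - 1) = X ∧ Tpath σ C k = Y then (1 : ℝ) else 0)
      - (if Tpath σ C (k - 1) = Y ∧ Tpath σ C k = X then (1 : ℝ) else 0))

/-- A maximal intersecting family `F` is `∅`-minimal if for every `a`, the coordinate
`Λ(F*)_{(∅,{a})}` is the minimum of `Λ(F*)_{(A, A ∪ {a})}` over all `A ⊆ [m] \ {a}`. -/
def EmptyMinimal (F : Finset (Finset (Fin m))) : Prop :=
  ∀ a : Fin m, ∀ A : Finset (Fin m), a ∉ A →
    LamW (dualFam F) ∅ {a} ≤ LamW (dualFam F) A (insert a A)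

/-!
Read `Λ(H)` as a flow on the cube graph of `P([m])`: each pair `(σ, C)` sends one unit along the
path `C = T⁰_σ(C), …, Tᵐ_σ(C) = Cᶜ`, so the net inflow of `Λ(H)` at `Z` is
`m! ([Zᶜ ∈ H] - [Z ∈ H])`. For `H = F*` this is `m! · vec(F)_Z`. Splitting the value of every
upward edge `A → A ∪ {a}` as `Λ(∅, {a})` plus an excess, the inflow at `Z` becomes
`Σ_a Λ(∅, {a}) · vec(Star_a)_Z` plus the inflow of the excesses. Hence `c_a = Λ(∅, {a}) / m!`
works: it is nonnegative because `F*` is down-closed, and the `c_a` sum to `1` by the inflow at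
`∅`. The excesses, divided by `m!`, are the `λ`'s, and `∅`-minimality makes them nonnegative.
-/

open scoped Nat

namespace IsIntersecting

variable {F : Finset (Finset (Fin m))}

theorem nonempty_of_mem (hF : IsIntersecting F) {A : Finset (Fin m)} (hA : A ∈ F) :
    A.Nonempty := by
  simpa using hF A hA A hA

theorem empty_notMem (hF : IsIntersecting F) : ∅ ∉ F :=
  fun h => not_nonempty_empty (hF.nonempty_of_mem h)

theorem insert {B : Finset (Fin m)} (hF : IsIntersecting F) (hB : B.Nonempty)
    (hBF : ∀ C ∈ F, (B ∩ C).Nonempty) : IsIntersecting (insert B F) := by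
  intro X hX Y hY
  rw [mem_insert] at hX hY
  rcases hX with rfl | hX <;> rcases hY with rfl | hY
  · simpa using hB
  · exact hBF Y hY
  · exact inter_comm X _ ▸ hBF X hX
  · exact hF X hX Y hY

theorem famVec_eq (hF : IsIntersecting F) (Z : Finset (Fin m)) :
    famVec F Z = (if Z ∈ F then 1 else 0) - (if Zᶜ ∈ F then 1 else 0) := by
  have : ¬(Z ∈ F ∧ Zᶜ ∈ F) := fun h => by simpa using hF _ h.1 _ h.2
  by_cases h₁ : Z ∈ F <;> by_cases h₂ : Zᶜ ∈ F <;> simp_all [famVec]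

end IsIntersecting

namespace IsMaxIntersecting

variable {F : Finset (Finset (Fin m))} (hF : IsMaxIntersecting F)
include hF

theorem mem_of_forall_inter_nonempty {B : Finset (Fin m)} (hB : B.Nonempty)
    (hBF : ∀ C ∈ F, (B ∩ C).Nonempty) : B ∈ F :=
  hF.2 _ (hF.1.insert hB hBF) (subset_insert B F) (mem_insert_self B F)

theorem mem_of_subset {A B : Finset (Fin m)} (hA : A ∈ F) (hAB : A ⊆ B) : B ∈ F :=
  hF.mem_of_forall_inter_nonempty ((hF.1.nonempty_of_mem hA).mono hAB)
    fun C hC => (hF.1 A hA C hC).mono (inter_subset_inter_right hAB)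

theorem univ_mem [NeZero m] : univ ∈ F :=
  hF.mem_of_forall_inter_nonempty univ_nonempty fun C hC => by
    simpa using hF.1.nonempty_of_mem hC

theorem isSubsetClosed_dualFam : IsSubsetClosed (dualFam F) := by
  intro A hA B hBA
  simp only [dualFam, mem_image] at hA ⊢
  obtain ⟨C, hC, rfl⟩ := hA
  exact ⟨Bᶜ, hF.mem_of_subset hC (by simpa using compl_subset_compl.2 hBA), compl_compl B⟩

end IsMaxIntersecting

theorem mem_dualFam {F : Finset (Finset (Fin m))} {Z : Finset (Fin m)} :
    Z ∈ dualFam F ↔ Zᶜ ∈ F := by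
  simp only [dualFam, mem_image]
  exact ⟨by rintro ⟨A, hA, rfl⟩; simpa using hA, fun h => ⟨Zᶜ, h, compl_compl Z⟩⟩

theorem famVec_starFam_univ (a : Fin m) (Z : Finset (Fin m)) :
    famVec (starFam a univ) Z = if a ∈ Z then 1 else -1 := by
  by_cases ha : a ∈ Z <;> simp [famVec, starFam, ha]

theorem symmDiff_singleton_of_mem {α : Type*} [DecidableEq α] {s : Finset α} {a : α}
    (ha : a ∈ s) : symmDiff s {a} = s.erase a := by
  ext x; by_cases hx : x = a <;> simp [mem_symmDiff, hx, ha]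

theorem symmDiff_singleton_of_notMem {α : Type*} [DecidableEq α] {s : Finset α} {a : α}
    (ha : a ∉ s) : symmDiff s {a} = insert a s := by
  ext x; by_cases hx : x = a <;> simp [mem_symmDiff, hx, ha]

def edgeFlow {α : Type*} [DecidableEq α] (P Q X Y : Finset α) : ℝ :=
  (if P = X ∧ Q = Y then 1 else 0) - (if P = Y ∧ Q = X then 1 else 0)

theorem sum_edgeFlow_symmDiff_singleton {α : Type*} [Fintype α] [DecidableEq α]
    {P Q : Finset α} {e : α} (hPQ : Q = symmDiff P {e}) (Z : Finset α) :
    ∑ a, edgeFlow P Q (symmDiff Z {a}) Z = (if Q = Z then 1 else 0) - (if P = Z then 1 else 0) := by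
  subst hPQ
  have hsingle : ∀ {S : Finset α} {a b : α}, symmDiff S {a} = symmDiff S {b} ↔ a = b := by
    intro S a b; rw [symmDiff_right_inj, singleton_inj]
  have hin : ∀ a, (P = symmDiff Z {a} ∧ symmDiff P {e} = Z) ↔ (a = e ∧ symmDiff P {e} = Z) := by
    refine fun a => ⟨fun ⟨hP, hQ⟩ => ⟨?_, hQ⟩, fun ⟨hae, hQ⟩ => ⟨?_, hQ⟩⟩
    · have : P = symmDiff Z {e} := by rw [← hQ, symmDiff_symmDiff_cancel_right]
      exact hsingle.1 (hP.symm.trans this)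
    · rw [← hQ, hae, symmDiff_symmDiff_cancel_right]
  have hout : ∀ a, (P = Z ∧ symmDiff P {e} = symmDiff Z {a}) ↔ (a = e ∧ P = Z) := by
    refine fun a => ⟨fun ⟨hP, hQ⟩ => ⟨?_, hP⟩, fun ⟨hae, hP⟩ => ⟨hP, by rw [hP, hae]⟩⟩
    rw [hP] at hQ
    exact (hsingle.1 hQ).symm
  simp only [edgeFlow, hin, hout, sum_sub_distrib, ite_and, sum_ite_eq', mem_univ, if_true]

theorem sum_edgeFlow_empty_singleton_nonneg {H : Finset (Finset (Fin m))} (hH : IsSubsetClosed H)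
    {P Q : Finset (Fin m)} (hPQ : P ⊆ Q) (a : Fin m) :
    0 ≤ ∑ C ∈ H, edgeFlow (symmDiff C P) (symmDiff C Q) ∅ {a} := by
  have hempty : ∀ {C D : Finset (Fin m)}, symmDiff C D = ∅ ↔ C = D := by
    intro C D; rw [← bot_eq_empty, symmDiff_eq_bot]
  have hstart : ∀ C, (symmDiff C P = ∅ ∧ symmDiff C Q = {a}) ↔ (C = P ∧ symmDiff P Q = {a}) :=
    fun C => by rw [hempty]; constructor <;> rintro ⟨rfl, h⟩ <;> exact ⟨rfl, h⟩
  have hend : ∀ C, (symmDiff C P = {a} ∧ symmDiff C Q = ∅) ↔ (C = Q ∧ symmDiff P Q = {a}) :=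
    fun C => by
      rw [hempty, symmDiff_comm P, and_comm]
      constructor <;> rintro ⟨rfl, h⟩ <;> exact ⟨rfl, h⟩
  simp only [edgeFlow, hstart, hend, ite_and, sum_sub_distrib, sum_ite_eq']
  by_cases hQ : Q ∈ H
  · simp [hQ, hH Q hQ P hPQ]
  · simp only [hQ, if_false]; split_ifs <;> norm_num

/-- `Tpath σ C k` is `C ∆ permPrefix σ k` by definition. -/
def permPrefix (σ : Equiv.Perm (Fin m)) (k : ℕ) : Finset (Fin m) :=
  (univ.filter fun i : Fin m => (i : ℕ) < k).image σ

theorem mem_permPrefix {σ : Equiv.Perm (Fin m)} {k : ℕ} {x : Fin m} :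
    x ∈ permPrefix σ k ↔ (σ.symm x : ℕ) < k := by
  simp only [permPrefix, mem_image, mem_filter, mem_univ, true_and]
  exact ⟨by rintro ⟨i, hi, rfl⟩; simpa using hi, fun h => ⟨σ.symm x, h, σ.apply_symm_apply x⟩⟩

theorem permPrefix_mono (σ : Equiv.Perm (Fin m)) : Monotone (permPrefix σ) :=
  fun _ _ hjk _ hx => mem_permPrefix.2 ((mem_permPrefix.1 hx).trans_le hjk)

theorem Tpath_zero (σ : Equiv.Perm (Fin m)) (C : Finset (Fin m)) : Tpath σ C 0 = C := by
  ext x; simp [Tpath, mem_symmDiff]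

theorem Tpath_length (σ : Equiv.Perm (Fin m)) (C : Finset (Fin m)) : Tpath σ C m = Cᶜ := by
  ext x; simp [Tpath, mem_symmDiff]

theorem Tpath_succ (σ : Equiv.Perm (Fin m)) (C : Finset (Fin m)) (i : Fin m) :
    Tpath σ C (i + 1) = symmDiff (Tpath σ C i) {σ i} := by
  have hprefix : permPrefix σ (i + 1) = symmDiff (permPrefix σ i) {σ i} := by
    ext x
    simp only [mem_symmDiff, mem_permPrefix, mem_singleton, ← Equiv.symm_apply_eq, Fin.ext_iff]
    omega
  change symmDiff C (permPrefix σ (i + 1)) = symmDiff (symmDiff C (permPrefix σ i)) {σ i}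
  rw [hprefix, symmDiff_assoc]

theorem LamW_eq_sum_fin (H : Finset (Finset (Fin m))) (X Y : Finset (Fin m)) :
    LamW H X Y = ∑ σ : Equiv.Perm (Fin m), ∑ C ∈ H, ∑ i : Fin m,
      edgeFlow (Tpath σ C i) (Tpath σ C (i + 1)) X Y := by
  refine sum_congr rfl fun σ _ => sum_congr rfl fun C _ => ?_
  rw [Fin.sum_univ_eq_sum_range (fun i => edgeFlow (Tpath σ C i) (Tpath σ C (i + 1)) X Y),
    range_eq_Ico, ← sum_Ico_add_right_sub_eq (c := 1)]
  refine sum_congr (by ext; simp) fun k hk => ?_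
  rw [Nat.sub_add_cancel (by simp at hk; omega)]
  rfl

section Flow

variable (H : Finset (Finset (Fin m)))

theorem LamW_swap (X Y : Finset (Fin m)) : LamW H Y X = -LamW H X Y := by
  simp only [LamW, ← sum_neg_distrib, neg_sub]

theorem sum_LamW_symmDiff_singleton (Z : Finset (Fin m)) :
    ∑ a, LamW H (symmDiff Z {a}) Z =
      m ! * ((if Zᶜ ∈ H then 1 else 0) - (if Z ∈ H then 1 else 0)) := by
  have hstep : ∀ σ C,
      ∑ i : Fin m, ∑ a, edgeFlow (Tpath σ C i) (Tpath σ C (i + 1)) (symmDiff Z {a}) Z =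
        (if C = Zᶜ then 1 else 0) - (if C = Z then 1 else 0) := by
    intro σ C
    simp only [sum_edgeFlow_symmDiff_singleton (Tpath_succ σ C _) Z]
    rw [Fin.sum_univ_eq_sum_range (fun i => (if Tpath σ C (i + 1) = Z then (1 : ℝ) else 0)
      - (if Tpath σ C i = Z then 1 else 0)),
      sum_range_sub (fun i => if Tpath σ C i = Z then (1 : ℝ) else 0), Tpath_length, Tpath_zero]
    simp only [compl_eq_comm, eq_comm (a := Zᶜ)]
  calc ∑ a, LamW H (symmDiff Z {a}) Z
      = ∑ _σ : Equiv.Perm (Fin m), ∑ C ∈ H,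
          ((if C = Zᶜ then 1 else 0) - (if C = Z then 1 else 0)) := by
        simp only [LamW_eq_sum_fin]
        rw [sum_comm]
        refine sum_congr rfl fun σ _ => ?_
        rw [sum_comm]
        refine sum_congr rfl fun C _ => ?_
        rw [sum_comm, hstep]
    _ = m ! * ((if Zᶜ ∈ H then 1 else 0) - (if Z ∈ H then 1 else 0)) := by
        simp [sum_sub_distrib, sum_ite_eq', Fintype.card_perm, mul_sub]

theorem sum_LamW_empty_singleton (h₀ : ∅ ∈ H) (hu : univ ∉ H) :
    ∑ a, LamW H ∅ {a} = m ! := by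
  have hdiv := sum_LamW_symmDiff_singleton H ∅
  have hsd : ∀ a : Fin m, symmDiff ∅ {a} = ({a} : Finset (Fin m)) := fun _ => bot_symmDiff _
  simp only [hsd, compl_empty, h₀, hu, LamW_swap H ∅, sum_neg_distrib, if_true, if_false] at hdiv
  linarith

theorem LamW_empty_singleton_nonneg (hH : IsSubsetClosed H) (a : Fin m) : 0 ≤ LamW H ∅ {a} := by
  rw [LamW_eq_sum_fin]
  refine sum_nonneg fun σ _ => ?_
  rw [sum_comm]
  exact sum_nonneg fun i _ =>
    sum_edgeFlow_empty_singleton_nonneg hH (permPrefix_mono σ i.val.le_succ) a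

end Flow

/-- The coefficient of `e_B - e_A` induced by a weighting `g A a` of the upward cube edges
`A → insert a A`. -/
def upEdgeCoeff (g : Finset (Fin m) → Fin m → ℝ) (A B : Finset (Fin m)) : ℝ :=
  ∑ a, if a ∉ A ∧ B = insert a A then g A a else 0

theorem sum_upEdgeCoeff_smul (g : Finset (Fin m) → Fin m → ℝ) :
    ∑ B, ∑ A ∈ B.powerset, upEdgeCoeff g A B • (stdBasis B - stdBasis A) =
      ∑ a, ∑ A, if a ∉ A then g A a • (stdBasis (insert a A) - stdBasis A) else 0 := by
  have hpowerset : ∀ B : Finset (Fin m),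
      ∑ A ∈ B.powerset, upEdgeCoeff g A B • (stdBasis B - stdBasis A) =
        ∑ A, upEdgeCoeff g A B • (stdBasis B - stdBasis A) := fun B =>
    sum_subset (subset_univ _) fun A _ hA => by
      refine smul_eq_zero_of_left (sum_eq_zero fun a _ => if_neg ?_) _
      rintro ⟨-, rfl⟩
      exact hA (mem_powerset.2 (subset_insert a A))
  rw [sum_congr rfl fun B _ => hpowerset B]
  simp only [upEdgeCoeff, sum_smul, ite_smul, zero_smul]
  calc _ = ∑ A : Finset (Fin m), ∑ a : Fin m, ∑ B : Finset (Fin m),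
        if a ∉ A ∧ B = insert a A then g A a • (stdBasis B - stdBasis A)
          else (0 : Finset (Fin m) → ℝ) := by
        rw [sum_comm]
        exact sum_congr rfl fun A _ => sum_comm
    _ = _ := by
        simp only [and_comm (a := _ ∉ _), ite_and, sum_ite_eq', mem_univ, if_true]
        exact sum_comm

theorem sum_upEdgeCoeff_smul_apply (g : Finset (Fin m) → Fin m → ℝ) (Z : Finset (Fin m)) :
    (∑ B, ∑ A ∈ B.powerset, upEdgeCoeff g A B • (stdBasis B - stdBasis A)) Z =
      ∑ a, if a ∈ Z then g (Z.erase a) a else -g Z a := by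
  rw [sum_upEdgeCoeff_smul, Finset.sum_apply]
  refine sum_congr rfl fun a _ => ?_
  simp only [Finset.sum_apply, apply_ite (fun v : Finset (Fin m) → ℝ => v Z), Pi.smul_apply,
    Pi.sub_apply, Pi.zero_apply, stdBasis, smul_eq_mul, mul_sub, mul_ite, mul_one, mul_zero]
  by_cases ha : a ∈ Z
  · rw [if_pos ha, sum_eq_single (Z.erase a)]
    · simp [ha, eq_comm (a := Z)]
    · intro A _ hA
      split_ifs <;> simp_all
    · simp
  · rw [if_neg ha, sum_eq_single Z]
    · simp [ha, eq_comm (a := Z)]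
    · intro A _ hA
      split_ifs <;> simp_all
    · simp

theorem upEdgeCoeff_nonneg {g : Finset (Fin m) → Fin m → ℝ} (hg : ∀ A a, a ∉ A → 0 ≤ g A a)
    (A B : Finset (Fin m)) : 0 ≤ upEdgeCoeff g A B :=
  sum_nonneg fun a _ => by
    split_ifs with h
    exacts [hg A a h.1, le_rfl]

section Weights

variable (H : Finset (Finset (Fin m)))

noncomputable def starWeight (a : Fin m) : ℝ := LamW H ∅ {a} / m !

noncomputable def edgeWeight (A : Finset (Fin m)) (a : Fin m) : ℝ :=
  (LamW H A (insert a A) - LamW H ∅ {a}) / m !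

theorem starWeight_nonneg (hH : IsSubsetClosed H) (a : Fin m) : 0 ≤ starWeight H a :=
  div_nonneg (LamW_empty_singleton_nonneg H hH a) (Nat.cast_nonneg _)

theorem sum_starWeight (h₀ : ∅ ∈ H) (hu : univ ∉ H) : ∑ a, starWeight H a = 1 := by
  simp only [starWeight]
  rw [← sum_div, sum_LamW_empty_singleton H h₀ hu, div_self (by positivity)]

theorem starWeight_smul_add_upEdgeCoeff_edgeWeight :
    ∑ a, starWeight H a • famVec (starFam a univ) +
        ∑ B, ∑ A ∈ B.powerset, upEdgeCoeff (edgeWeight H) A B • (stdBasis B - stdBasis A) =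
      fun Z => (if Zᶜ ∈ H then 1 else 0) - (if Z ∈ H then 1 else 0) := by
  funext Z
  have hterm : ∀ a, starWeight H a * famVec (starFam a univ) Z +
      (if a ∈ Z then edgeWeight H (Z.erase a) a else -edgeWeight H Z a) =
      LamW H (symmDiff Z {a}) Z / m ! := by
    intro a
    rw [famVec_starFam_univ, starWeight, edgeWeight, edgeWeight]
    by_cases ha : a ∈ Z
    · rw [if_pos ha, if_pos ha, symmDiff_singleton_of_mem ha, insert_erase ha]
      ring
    · rw [if_neg ha, if_neg ha, symmDiff_singleton_of_notMem ha, LamW_swap H Z (insert a Z)]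
      ring
  rw [Pi.add_apply, sum_upEdgeCoeff_smul_apply, Finset.sum_apply, ← sum_add_distrib]
  simp only [Pi.smul_apply, smul_eq_mul, hterm]
  rw [← sum_div, sum_LamW_symmDiff_singleton, mul_div_cancel_left₀ _ (by positivity)]

theorem EmptyMinimal.edgeWeight_nonneg {F : Finset (Finset (Fin m))} (hmin : EmptyMinimal F)
    {A : Finset (Fin m)} {a : Fin m} (ha : a ∉ A) : 0 ≤ edgeWeight (dualFam F) A a :=
  div_nonneg (sub_nonneg.2 (hmin a A ha)) (Nat.cast_nonneg _)

end Weights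

/-- Every `∅`-minimal maximal intersecting family admits the decomposition required by
Kleitman's conjecture. -/
theorem kleitman_of_emptyMinimal (m : ℕ) (hm : 1 ≤ m) (F : Finset (Finset (Fin m)))
    (hF : IsMaxIntersecting F) (hmin : EmptyMinimal F) :
    ∃ (c : Fin m → ℝ) (lam : Finset (Fin m) → Finset (Fin m) → ℝ),
      (∀ a, 0 ≤ c a) ∧ (∑ a, c a = 1) ∧
      (∀ A B : Finset (Fin m), A ⊆ B → 0 ≤ lam A B) ∧
      famVec F = (∑ a, c a • famVec (starFam a Finset.univ)) +
        ∑ B : Finset (Fin m), ∑ A ∈ B.powerset, lam A B • (stdBasis B - stdBasis A) := by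
  have : NeZero m := ⟨by omega⟩
  have h₀ : ∅ ∈ dualFam F := mem_dualFam.2 (by simpa using hF.univ_mem)
  have hu : univ ∉ dualFam F := fun h => hF.1.empty_notMem (by simpa using mem_dualFam.1 h)
  refine ⟨starWeight (dualFam F), upEdgeCoeff (edgeWeight (dualFam F)),
    starWeight_nonneg _ hF.isSubsetClosed_dualFam, sum_starWeight _ h₀ hu,
    fun A B _ => upEdgeCoeff_nonneg (fun _ _ => hmin.edgeWeight_nonneg) A B, ?_⟩
  rw [starWeight_smul_add_upEdgeCoeff_edgeWeight]
  funext Z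
  simp only [hF.1.famVec_eq, mem_dualFam, compl_compl]
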